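/- arXiv:2001.08066 — 6 statements merged into one kernel-verified Lean document; each statement's English description precedes it below -/
import Mathlib

section
/- For every integer k ≥ 1: 1 + ((F(6k+2)-1)/2)*F(6k+3) + ((F(6k+2)-1)/2)*F(6k+4) = (F(6k+3)-1)*(F(6k+4)-1)/2. -/
lemma cassini_aux (n : ℕ) :
    (Nat.fib n : ℤ) * Nat.fib (n + 2) = (Nat.fib (n + 1))^2 + (-1)^(n + 1) := by
  induction n with
  | zero => simp
  | succ m ih =>
    have h1 : Nat.fib (m + 3) = Nat.fib (m + 1) + Nat.fib (m + 2) := Nat.fib_add_two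
    have h2 : Nat.fib (m + 2) = Nat.fib m + Nat.fib (m + 1) := Nat.fib_add_two
    push_cast [h1, h2, pow_succ] at *
    ring_nf at *
    linarith [ih]

lemma fib_parity (n : ℕ) : Nat.fib (3 * n) % 2 = 0 ∧ Nat.fib (3 * n + 1) % 2 = 1 := by
  induction n with
  | zero => simp
  | succ m ih =>
    have e1 : Nat.fib (3 * m + 2) = Nat.fib (3 * m) + Nat.fib (3 * m + 1) := Nat.fib_add_two
    have e2 : Nat.fib (3 * m + 3) = Nat.fib (3 * m + 1) + Nat.fib (3 * m + 2) := Nat.fib_add_two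
    have e3 : Nat.fib (3 * m + 4) = Nat.fib (3 * m + 2) + Nat.fib (3 * m + 3) := Nat.fib_add_two
    have : 3 * (m + 1) = 3 * m + 3 := by ring
    rw [this]
    have : 3 * m + 3 + 1 = 3 * m + 4 := by ring
    rw [this]
    omega

theorem stmt_10 (k : ℕ) (hk : 1 ≤ k) :
    1 + (Nat.fib (6 * k + 2) - 1) / 2 * Nat.fib (6 * k + 3) +
      (Nat.fib (6 * k + 2) - 1) / 2 * Nat.fib (6 * k + 4) =
    (Nat.fib (6 * k + 3) - 1) * (Nat.fib (6 * k + 4) - 1) / 2 := by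
  set a := Nat.fib (6 * k + 2) with ha
  set b := Nat.fib (6 * k + 3) with hb
  set c := Nat.fib (6 * k + 4) with hc
  -- parity facts
  have hpa : a % 2 = 1 := by
    have := (fib_parity (2 * k)).2
    have h : 3 * (2 * k) + 1 = 6 * k + 1 := by ring
    rw [h] at this
    have e : a = Nat.fib (6 * k) + Nat.fib (6 * k + 1) := Nat.fib_add_two
    have := (fib_parity (2 * k)).1
    have h2 : 3 * (2 * k) = 6 * k := by ring
    rw [h2] at this
    omega
  have hpb : b % 2 = 0 := by
    have := (fib_parity (2 * k + 1)).1
    have h : 3 * (2 * k + 1) = 6 * k + 3 := by ring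
    rw [h] at this
    exact this
  -- positivity
  have hb1 : 1 ≤ b := Nat.fib_pos.mpr (by omega)
  have hc1 : 1 ≤ c := Nat.fib_pos.mpr (by omega)
  have ha1 : 1 ≤ a := Nat.fib_pos.mpr (by omega)
  -- c = a + b
  have hcab : c = a + b := Nat.fib_add_two
  -- Cassini
  have hcas : (a : ℤ) * c = (b : ℤ)^2 - 1 := by
    have := cassini_aux (6 * k + 2)
    have hodd : Odd (6 * k + 3) := ⟨3 * k + 1, by ring⟩
    rw [hodd.neg_one_pow] at this
    have h1 : 6 * k + 2 + 2 = 6 * k + 4 := by ring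
    have h2 : 6 * k + 2 + 1 = 6 * k + 3 := by ring
    rw [h1, h2] at this
    rw [← ha, ← hb, ← hc] at this
    linarith
  obtain ⟨m, hm⟩ : ∃ m, a = 2 * m + 1 := ⟨a / 2, by omega⟩
  have hdiv : (a - 1) / 2 = m := by omega
  rw [hdiv]
  have key : (b - 1) * (c - 1) = 2 * (1 + m * b + m * c) := by
    have hz : ((b : ℤ) - 1) * ((c : ℤ) - 1) = 2 * (1 + (m : ℤ) * b + (m : ℤ) * c) := by
      have hcz : (c : ℤ) = a + b := by exact_mod_cast hcab
      have haz : (a : ℤ) = 2 * m + 1 := by exact_mod_cast hm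
      nlinarith [hcas, hcz, haz]
    zify [hb1, hc1]
    linarith [hz]
  rw [key, Nat.mul_div_cancel_left _ (by norm_num : 0 < 2)]
end

section
/- For every integer k ≥ 1: 1 + ((F(6k+4)-1)/2)*F(6k+5) + ((F(6k+4)-1)/2)*F(6k+6) = (F(6k+5)-1)*(F(6k+6)-1)/2. -/
lemma fib_par : ∀ m : ℕ, Nat.fib (3*m) % 2 = 0 ∧ Nat.fib (3*m+1) % 2 = 1 ∧ Nat.fib (3*m+2) % 2 = 1 := by
  intro m
  induction m with
  | zero => simp
  | succ n ih =>
    have h1 : Nat.fib (3*(n+1)) = Nat.fib (3*n+1) + Nat.fib (3*n+2) := by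
      have := Nat.fib_add_two (n := 3*n+1)
      rw [show 3*(n+1) = 3*n+1+2 by ring, this, show 3*n+1+1 = 3*n+2 by ring]
    have h2 : Nat.fib (3*(n+1)+1) = Nat.fib (3*n+2) + Nat.fib (3*(n+1)) := by
      have := Nat.fib_add_two (n := 3*n+2)
      rw [show 3*(n+1)+1 = 3*n+2+2 by ring, this, show 3*n+2+1 = 3*(n+1) by ring]
    have h3 : Nat.fib (3*(n+1)+2) = Nat.fib (3*(n+1)) + Nat.fib (3*(n+1)+1) := Nat.fib_add_two
    omega

lemma fib_cassini : ∀ m : ℕ, Nat.fib (2*m+1) * Nat.fib (2*m+1) =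
    Nat.fib (2*m) * Nat.fib (2*m+1) + Nat.fib (2*m) * Nat.fib (2*m) + 1 := by
  intro m
  induction m with
  | zero => simp
  | succ n ih =>
    have h1 : Nat.fib (2*(n+1)) = Nat.fib (2*n) + Nat.fib (2*n+1) := Nat.fib_add_two
    have h2 : Nat.fib (2*(n+1)+1) = Nat.fib (2*n+1) + Nat.fib (2*(n+1)) := by
      have := Nat.fib_add_two (n := 2*n+1)
      rw [show 2*(n+1)+1 = 2*n+1+2 by ring, this, show 2*n+1+1 = 2*(n+1) by ring]
    rw [h2, h1]
    nlinarith [ih]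

theorem stmt_12 (k : ℕ) (hk : 1 ≤ k) :
    1 + (Nat.fib (6 * k + 4) - 1) / 2 * Nat.fib (6 * k + 5) +
      (Nat.fib (6 * k + 4) - 1) / 2 * Nat.fib (6 * k + 6) =
    (Nat.fib (6 * k + 5) - 1) * (Nat.fib (6 * k + 6) - 1) / 2 := by
  have hc : Nat.fib (6*k+6) = Nat.fib (6*k+4) + Nat.fib (6*k+5) := by
    have := Nat.fib_add_two (n := 6*k+4)
    rw [show 6*k+6 = 6*k+4+2 by ring, this]
  have hpa := (fib_par (2*k+1)).2.1
  have hpb := (fib_par (2*k+1)).2.2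
  rw [show 3*(2*k+1)+1 = 6*k+4 by ring] at hpa
  rw [show 3*(2*k+1)+2 = 6*k+5 by ring] at hpb
  have hcas := fib_cassini (3*k+2)
  rw [show 2*(3*k+2) = 6*k+4 by ring, show 6*k+4+1 = 6*k+5 by omega] at hcas
  obtain ⟨x, hx⟩ : ∃ x, Nat.fib (6*k+4) = 2*x+1 := ⟨Nat.fib (6*k+4)/2, by omega⟩
  obtain ⟨y, hy⟩ : ∃ y, Nat.fib (6*k+5) = 2*y+1 := ⟨Nat.fib (6*k+5)/2, by omega⟩
  rw [hx, hy] at hcas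
  have hdiv1 : (2*x+1-1)/2 = x := by omega
  have hdiv2 : (2*y+1-1)*((2*x+1)+(2*y+1)-1)/2 = y*(2*x+2*y+1) := by
    rw [show (2*x+1)+(2*y+1)-1 = 2*x+2*y+1 by omega, show 2*y+1-1 = 2*y by omega,
      Nat.mul_assoc 2 y _, Nat.mul_div_cancel_left _ (by norm_num)]
  rw [hc, hx, hy, hdiv1, hdiv2]
  nlinarith [hcas]
end

section
/- For every integer k ≥ 1, the equation 1 + F(6k+3)*x + F(6k+4)*y = (F(6k+3)-1)*(F(6k+4)-1)/2 has a unique solution in nonnegative integers, and that solution is x = y = (F(6k+2)-1)/2. -/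
lemma fib_mod2 (m : ℕ) : Nat.fib (3*m) % 2 = 0 ∧ Nat.fib (3*m+1) % 2 = 1 ∧ Nat.fib (3*m+2) % 2 = 1 := by
  induction m with
  | zero => simp
  | succ n ih =>
    have e1 : Nat.fib (3*n+3) = Nat.fib (3*n+1) + Nat.fib (3*n+2) := by
      rw [show 3*n+3 = 3*n+1+2 from by ring, Nat.fib_add_two]
    have e2 : Nat.fib (3*n+4) = Nat.fib (3*n+2) + Nat.fib (3*n+3) := by
      rw [show 3*n+4 = 3*n+2+2 from by ring, Nat.fib_add_two]
    have e3 : Nat.fib (3*n+5) = Nat.fib (3*n+3) + Nat.fib (3*n+4) := by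
      rw [show 3*n+5 = 3*n+3+2 from by ring, Nat.fib_add_two]
    rw [show 3*(n+1)+2 = 3*n+5 from by ring, show 3*(n+1)+1 = 3*n+4 from by ring,
        show 3*(n+1) = 3*n+3 from by ring]
    omega

lemma cassini (j : ℕ) : Nat.fib (2*j+2)^2 + 1 = Nat.fib (2*j+1) * Nat.fib (2*j+3) := by
  induction j with
  | zero => simp [Nat.fib]
  | succ n ih =>
    set a := Nat.fib (2*n+1) with ha
    set b := Nat.fib (2*n+2) with hb
    have e1 : Nat.fib (2*n+3) = a + b := by
      rw [show 2*n+3 = 2*n+1+2 from by ring, Nat.fib_add_two]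
    have e2 : Nat.fib (2*n+4) = b + (a+b) := by
      rw [show 2*n+4 = 2*n+2+2 from by ring, Nat.fib_add_two, e1]
    have e3 : Nat.fib (2*n+5) = (a+b) + (b+(a+b)) := by
      rw [show 2*n+5 = 2*n+3+2 from by ring, Nat.fib_add_two, e1, e2]
    rw [show 2*(n+1)+2 = 2*n+4 from by ring, show 2*(n+1)+1 = 2*n+3 from by ring,
        show 2*(n+1)+3 = 2*n+5 from by ring, e2, e3, e1]
    rw [e1] at ih
    nlinarith [ih]

theorem stmt_14 (k : ℕ) (hk : 1 ≤ k) :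
    ∀ xy : ℕ × ℕ,
      1 + Nat.fib (6 * k + 3) * xy.1 + Nat.fib (6 * k + 4) * xy.2 =
        (Nat.fib (6 * k + 3) - 1) * (Nat.fib (6 * k + 4) - 1) / 2 ↔
      xy = ((Nat.fib (6 * k + 2) - 1) / 2, (Nat.fib (6 * k + 2) - 1) / 2) := by
  intro xy
  obtain ⟨x, y⟩ := xy
  dsimp only
  set c := Nat.fib (6*k+2) with hc
  set A := Nat.fib (6*k+3) with hA
  set B := Nat.fib (6*k+4) with hB
  have hpar := fib_mod2 (2*k)
  have hpar2 := fib_mod2 (2*k+1)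
  have hcodd : c % 2 = 1 := by
    rw [hc, show 6*k+2 = 3*(2*k)+2 from by ring]; exact hpar.2.2
  have hAeven : A % 2 = 0 := by
    rw [hA, show 6*k+3 = 3*(2*k+1) from by ring]; exact hpar2.1
  have hBodd : B % 2 = 1 := by
    rw [hB, show 6*k+4 = 3*(2*k+1)+1 from by ring]; exact hpar2.2.1
  have hBA : B = A + c := by
    rw [hB, hA, hc, show 6*k+4 = 6*k+2+2 from by ring, Nat.fib_add_two]; ring
  have hcpos : 0 < c := by rw [hc]; exact Nat.fib_pos.mpr (by omega)
  have hcA : c < A := by rw [hc, hA]; exact Nat.fib_lt_fib_succ (by omega)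
  have hAB : A < B := by rw [hA, hB]; exact Nat.fib_lt_fib_succ (by omega)
  have hcas : B^2 + 1 = A * (A + B) := by
    have h := cassini (3*k+1)
    rw [show 2*(3*k+1)+2 = 6*k+4 from by ring, show 2*(3*k+1)+1 = 6*k+3 from by ring,
        show 2*(3*k+1)+3 = 6*k+5 from by ring] at h
    have e : Nat.fib (6*k+5) = A + B := by
      rw [show 6*k+5 = 6*k+3+2 from by ring, Nat.fib_add_two, ← hA, ← hB]
    rw [e] at h
    rw [← hA, ← hB] at h
    exact h
  have hcop : Nat.Coprime A B := by
    rw [hA, hB]; exact Nat.fib_coprime_fib_succ (6*k+3)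
  clear_value c A B
  clear hc hA hB hpar hpar2
  obtain ⟨m, hcm⟩ : ∃ m, c = 2*m + 1 := ⟨(c-1)/2, by omega⟩
  have hmdef : (c - 1) / 2 = m := by omega
  rw [hmdef]
  have hmA : m < A := by omega
  have hApos : 0 < A := by omega
  have hBpos : 0 < B := by omega
  have hkey : (A - 1) * (B - 1) / 2 = 1 + A * m + B * m := by
    have h2 : 2 * (1 + A * m + B * m) = (A - 1) * (B - 1) := by
      zify [show 1 ≤ A from by omega, show 1 ≤ B from by omega]
      have hcasz : (B:ℤ)^2 + 1 = A * (A+B) := by exact_mod_cast hcas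
      have hBAz : (B:ℤ) = A + c := by exact_mod_cast hBA
      have hcmz : (c:ℤ) = 2*m+1 := by exact_mod_cast hcm
      nlinarith [hcasz, hBAz, hcmz]
    omega
  rw [hkey]
  constructor
  · intro h
    have heq : A * x + B * y = A * m + B * m := by omega
    rcases le_or_gt y m with hy | hy
    · obtain ⟨u, hu⟩ : ∃ u, m = y + u := ⟨m - y, by omega⟩
      have e0 : B * m = B * y + B * u := by rw [hu, Nat.mul_add]
      have hxm : m ≤ x := by
        by_contra hc'
        push_neg at hc'
        have : A * x < A * m := (Nat.mul_lt_mul_left hApos).mpr hc'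
        linarith [heq, e0, Nat.zero_le (B * u)]
      obtain ⟨v, hv⟩ : ∃ v, x = m + v := ⟨x - m, by omega⟩
      have e2 : A * x = A * m + A * v := by rw [hv, Nat.mul_add]
      have hprod : B * u = A * v := by linarith [heq, e0, e2]
      have hdvd2 : A ∣ u := Nat.Coprime.dvd_of_dvd_mul_left hcop ⟨v, hprod⟩
      have hu0 : u = 0 := by
        rcases Nat.eq_zero_or_pos u with h0 | h0
        · exact h0
        · exact absurd (Nat.le_of_dvd h0 hdvd2) (by omega)
      have hv0 : A * v = 0 := by
        rw [← hprod, hu0, Nat.mul_zero]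
      have : v = 0 := by
        rcases Nat.mul_eq_zero.mp hv0 with h' | h'
        · omega
        · exact h'
      have hx : x = m := by omega
      have hy' : y = m := by omega
      rw [hx, hy']
    · exfalso
      obtain ⟨u, hu⟩ : ∃ u, y = m + u ∧ 1 ≤ u := ⟨y - m, by omega, by omega⟩
      have e0 : B * y = B * m + B * u := by rw [hu.1, Nat.mul_add]
      have hxm : x ≤ m := by
        by_contra hc'
        push_neg at hc'
        have h1 : A * m < A * x := (Nat.mul_lt_mul_left hApos).mpr hc'
        have h2 : B * m < B * y := (Nat.mul_lt_mul_left hBpos).mpr hy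
        linarith [heq]
      obtain ⟨v, hv⟩ : ∃ v, m = x + v := ⟨m - x, by omega⟩
      have e2 : A * m = A * x + A * v := by rw [hv, Nat.mul_add]
      have hprod : A * v = B * u := by linarith [heq, e0, e2]
      have hBle : B ≤ B * u := Nat.le_mul_of_pos_right B (by omega)
      have hdvd2 : B ∣ v := Nat.Coprime.dvd_of_dvd_mul_left hcop.symm ⟨u, hprod⟩
      have hvpos : 0 < v := by
        rcases Nat.eq_zero_or_pos v with h0 | h0
        · subst h0; simp only [Nat.mul_zero] at hprod; linarith [hBle, hBpos]
        · exact h0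
      have := Nat.le_of_dvd hvpos hdvd2
      omega
  · intro h
    rw [Prod.mk.injEq] at h
    rw [h.1, h.2]
end

section
/- For every integer k ≥ 0: ((F(6k+2)-1)/2)*F(6k+2) + ((F(6k+1)-1)/2)*F(6k+4) = (F(6k+2)-1)*(F(6k+4)-1)/2. -/
lemma fib_cassini_s15 (n : ℕ) :
    (Nat.fib (n+1) : ℤ)^2 - Nat.fib n * Nat.fib (n+2) = (-1)^n := by
  induction n with
  | zero => simp
  | succ m ih =>
    have h : (Nat.fib (m+3) : ℤ) = Nat.fib (m+1) + Nat.fib (m+2) := by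
      have := Nat.fib_add_two (n := m+1)
      rw [show m+1+2 = m+3 from by ring, show m+1+1 = m+2 from by ring] at this
      exact_mod_cast this
    have h' : (Nat.fib (m+2) : ℤ) = Nat.fib m + Nat.fib (m+1) := by
      exact_mod_cast Nat.fib_add_two (n := m)
    have e : (-1:ℤ)^(m+1) = -(-1)^m := by rw [pow_succ]; ring
    rw [show m+1+2 = m+3 from by ring, h, e, h']
    nlinarith [ih]

theorem stmt_15 (k : ℕ) :
    (Nat.fib (6 * k + 2) - 1) / 2 * Nat.fib (6 * k + 2) +
      (Nat.fib (6 * k + 1) - 1) / 2 * Nat.fib (6 * k + 4) =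
    (Nat.fib (6 * k + 2) - 1) * (Nat.fib (6 * k + 4) - 1) / 2 := by
  set a := Nat.fib (6*k+1) with ha
  set b := Nat.fib (6*k+2) with hb
  have h3 : Nat.fib (6*k+3) = a + b := by
    rw [ha, hb, show 6*k+3 = 6*k+1+2 from by ring, Nat.fib_add_two,
      show 6*k+1+1 = 6*k+2 from by ring]
  have h4 : Nat.fib (6*k+4) = a + 2*b := by
    rw [show 6*k+4 = 6*k+2+2 from by ring, Nat.fib_add_two,
      show 6*k+2+1 = 6*k+3 from by ring, h3, hb]
    ring
  have key : a * (a + b) = b * b + 1 := by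
    have hc := fib_cassini_s15 (6*k+1)
    rw [show 6*k+1+1 = 6*k+2 from by ring, show 6*k+1+2 = 6*k+3 from by ring, h3,
      ← ha, ← hb] at hc
    have hsgn : (-1:ℤ)^(6*k+1) = -1 := by
      rw [show 6*k+1 = 2*(3*k)+1 from by ring, pow_succ, pow_mul]; simp
    rw [hsgn] at hc
    have : (a:ℤ) * (a + b) = b * b + 1 := by push_cast at hc ⊢; nlinarith [hc]
    exact_mod_cast this
  have hodd := fib_mod2 (2*k)
  rw [show 3*(2*k)+2 = 6*k+2 from by ring, show 3*(2*k)+1 = 6*k+1 from by ring,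
    ← ha, ← hb] at hodd
  obtain ⟨-, hoa, hob⟩ := hodd
  obtain ⟨x, hx⟩ : ∃ x, a = 2*x+1 := ⟨a/2, by omega⟩
  obtain ⟨y, hy⟩ : ∃ y, b = 2*y+1 := ⟨b/2, by omega⟩
  have key' : (2*x+1) * ((2*x+1) + (2*y+1)) = (2*y+1) * (2*y+1) + 1 := by
    rw [← hx, ← hy]; exact key
  rw [h4, hx, hy]
  rw [show 2*y+1-1 = 2*y from by omega, show 2*x+1-1 = 2*x from by omega,
    show 2*x+1 + 2*(2*y+1) - 1 = 2*(x+2*y+1) from by omega,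
    Nat.mul_div_cancel_left _ (by norm_num : 0 < 2),
    Nat.mul_div_cancel_left _ (by norm_num : 0 < 2),
    show 2*y * (2*(x+2*y+1)) = 2 * (y * (2*(x+2*y+1))) from by ring,
    Nat.mul_div_cancel_left _ (by norm_num : 0 < 2)]
  nlinarith [key']
end

section
/- For every integer k ≥ 0: ((F(6k+4)-1)/2)*F(6k+3) + ((F(6k+1)-1)/2)*F(6k+5) = (F(6k+3)-1)*(F(6k+5)-1)/2. -/
/-!
Write x = F(6k+1), y = F(6k+3), z = F(6k+4), so that F(6k+5) = y + z. Doubling both sides, the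
identity becomes z y + x (y + z) = y (y + z) + 1, i.e. x (y + z) = y² + 1, which is Catalan's
identity F(n) F(n+4) = F(n+2)² + 1 for odd n. The halvings are exact because F(m) is even
exactly when 3 ∣ m.
-/

namespace Nat

theorem even_fib_iff_three_dvd : ∀ n : ℕ, Even (fib n) ↔ 3 ∣ n
  | 0 => by simp
  | 1 => by decide
  | 2 => by decide
  | n + 3 => by
    have hfib : fib (n + 3) = fib n + 2 * fib (n + 1) := by
      rw [fib_add_two, fib_add_two (n := n)]; ring
    rw [hfib, Nat.even_add, iff_true_intro (even_two_mul _), iff_true, even_fib_iff_three_dvd n]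
    omega

theorem fib_mul_fib_add_four_of_odd {n : ℕ} (hn : Odd n) :
    fib n * fib (n + 4) = fib (n + 2) ^ 2 + 1 := by
  have hcatalan := Int.fib_add_sq_sub_fib_mul_fib_add_two_mul n 2
  rw [Int.natAbs_natCast, hn.neg_one_pow] at hcatalan
  zify
  push_cast [← Int.fib_natCast, Int.fib_two] at hcatalan ⊢
  linear_combination -hcatalan

end Nat

theorem sub_one_div_two_identity_of_mul_eq_sq_add_one {x y z : ℕ} (hx : Odd x) (hy : Even y)
    (hz : Odd z) (h : x * (y + z) = y ^ 2 + 1) :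
    (z - 1) / 2 * y + (x - 1) / 2 * (y + z) = (y - 1) * (y + z - 1) / 2 := by
  obtain ⟨a, rfl⟩ := hx
  obtain ⟨b, rfl⟩ := hy
  obtain ⟨c, rfl⟩ := hz
  rcases b with _ | b
  · simp_all
  · have ha : (2 * a + 1 - 1) / 2 = a := by omega
    have hc : (2 * c + 1 - 1) / 2 = c := by omega
    have hr : b + 1 + (b + 1) + (2 * c + 1) - 1 = 2 * (b + 1 + c) := by omega
    rw [ha, hc, hr, mul_left_comm, Nat.mul_div_cancel_left _ two_pos]
    zify [show 1 ≤ b + 1 + (b + 1) by omega] at h ⊢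
    linarith

theorem stmt_16 (k : ℕ) :
    (Nat.fib (6 * k + 4) - 1) / 2 * Nat.fib (6 * k + 3) +
      (Nat.fib (6 * k + 1) - 1) / 2 * Nat.fib (6 * k + 5) =
    (Nat.fib (6 * k + 3) - 1) * (Nat.fib (6 * k + 5) - 1) / 2 := by
  have hodd : ∀ m, ¬ 3 ∣ m → Odd (Nat.fib m) := fun m hm =>
    Nat.not_even_iff_odd.1 (mt (Nat.even_fib_iff_three_dvd m).1 hm)
  have hcatalan := Nat.fib_mul_fib_add_four_of_odd (n := 6 * k + 1) ⟨3 * k, by ring⟩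
  rw [show Nat.fib (6 * k + 1 + 4) = Nat.fib (6 * k + 3) + Nat.fib (6 * k + 4) from Nat.fib_add_two]
    at hcatalan ⊢
  exact sub_one_div_two_identity_of_mul_eq_sq_add_one (hodd _ (by omega))
    ((Nat.even_fib_iff_three_dvd _).2 ⟨2 * k + 1, by ring⟩) (hodd _ (by omega)) hcatalan
end

section
/- For every integer k ≥ 0: 1 + ((F(6k+5)-1)/2)*F(6k+5) + ((F(6k+4)-1)/2)*F(6k+7) = (F(6k+5)-1)*(F(6k+7)-1)/2. -/
lemma fib_odd_aux : ∀ j, Odd (Nat.fib (3*j+1)) ∧ Odd (Nat.fib (3*j+2)) := by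
  intro j
  induction j with
  | zero => decide
  | succ n ih =>
    obtain ⟨h1, h2⟩ := ih
    have A : Nat.fib (3*n+2) = Nat.fib (3*n) + Nat.fib (3*n+1) := Nat.fib_add_two
    have B : Nat.fib (3*n+3) = Nat.fib (3*n+1) + Nat.fib (3*n+2) := Nat.fib_add_two
    have C : Nat.fib (3*n+4) = Nat.fib (3*n+2) + Nat.fib (3*n+3) := Nat.fib_add_two
    have D : Nat.fib (3*n+5) = Nat.fib (3*n+3) + Nat.fib (3*n+4) := Nat.fib_add_two
    have i1 : 3*(n+1)+1 = 3*n+4 := by ring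
    have i2 : 3*(n+1)+2 = 3*n+5 := by ring
    rw [Nat.odd_iff] at h1 h2
    constructor
    · rw [i1, Nat.odd_iff]; omega
    · rw [i2, Nat.odd_iff]; omega

lemma fib_key : ∀ m, Nat.fib (2*m+1)^2 = Nat.fib (2*m+1) * Nat.fib (2*m) + Nat.fib (2*m)^2 + 1 := by
  intro m
  induction m with
  | zero => decide
  | succ n ih =>
    have A : Nat.fib (2*n+2) = Nat.fib (2*n) + Nat.fib (2*n+1) := Nat.fib_add_two
    have B : Nat.fib (2*n+3) = Nat.fib (2*n+1) + Nat.fib (2*n+2) := Nat.fib_add_two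
    have i1 : 2*(n+1)+1 = 2*n+3 := by ring
    have i2 : 2*(n+1) = 2*n+2 := by ring
    rw [i1, i2, B, A]
    nlinarith [ih]

theorem stmt_18 (k : ℕ) :
    1 + (Nat.fib (6 * k + 5) - 1) / 2 * Nat.fib (6 * k + 5) +
      (Nat.fib (6 * k + 4) - 1) / 2 * Nat.fib (6 * k + 7) =
    (Nat.fib (6 * k + 5) - 1) * (Nat.fib (6 * k + 7) - 1) / 2 := by
  obtain ⟨x, hx⟩ : Odd (Nat.fib (6*k+4)) := by
    have := (fib_odd_aux (2*k+1)).1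
    have h : 3*(2*k+1)+1 = 6*k+4 := by ring
    rwa [h] at this
  obtain ⟨y, hy⟩ : Odd (Nat.fib (6*k+5)) := by
    have := (fib_odd_aux (2*k+1)).2
    have h : 3*(2*k+1)+2 = 6*k+5 := by ring
    rwa [h] at this
  have hc : Nat.fib (6*k+7) = Nat.fib (6*k+4) + 2 * Nat.fib (6*k+5) := by
    have A : Nat.fib (6*k+6) = Nat.fib (6*k+4) + Nat.fib (6*k+5) := Nat.fib_add_two
    have B : Nat.fib (6*k+7) = Nat.fib (6*k+5) + Nat.fib (6*k+6) := Nat.fib_add_two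
    omega
  have hkey := fib_key (3*k+2)
  have h1 : 2*(3*k+2)+1 = 6*k+5 := by ring
  have h2 : 2*(3*k+2) = 6*k+4 := by ring
  rw [h1, h2, hx, hy] at hkey
  rw [hc, hx, hy]
  have s1 : 2*y+1-1 = 2*y := by omega
  have s2 : 2*x+1+2*(2*y+1)-1 = 2*x+4*y+2 := by omega
  have s3 : (2*y+1-1)/2 = y := by omega
  have s4 : (2*x+1-1)/2 = x := by omega
  rw [s3, s4, s1, s2]
  rw [show 2*y*(2*x+4*y+2) = 2*(y*(2*x+4*y+2)) from by ring,
    Nat.mul_div_cancel_left _ two_pos]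
  nlinarith [hkey]
end
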